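/- Discrete duality (summation by parts) for the forward-backward pair: let x^w satisfy x^w_{k+1} = A_k x^w_k + B_k w_k + (D_k x^w_k + E_k w_k) ω_k with x^w_0 = 0, and let y satisfy the backward recursion y_k = A_k^⊤ E[y_{k+1} | F_{k-1}] + D_k^⊤ E[y_{k+1} ω_k | F_{k-1}] + φ_k with terminal y_N. Then, assuming w_k and φ_k are F_{k-1}-measurable and all processes square-integrable, E⟨y_N, x^w_N⟩ = E Σ_{k=0}^{N-1} [ -⟨φ_k, x^w_k⟩ + ⟨B_k^⊤ E[y_{k+1}|F_{k-1}] + E_k^⊤ E[y_{k+1} ω_k | F_{k-1}], w_k⟩ ]. -/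

import Mathlib

/-!
Write `x_{k+1} = a_k + ω_k g_k` with `a_k = A_k x_k + B_k w_k` and `g_k = D_k x_k + E_k w_k`
measurable with respect to `F_{k-1}`. Pulling them out of the conditional expectation gives
`E[⟨y_{k+1}, x_{k+1}⟩ | F_{k-1}] = ⟨a_k, E[y_{k+1} | F_{k-1}]⟩ + ⟨g_k, E[ω_k y_{k+1} | F_{k-1}]⟩`.
Moving the matrices across the dot products and subtracting `⟨y_k, x_k⟩`, expanded by the backward
recursion, leaves exactly the `k`-th summand of the right-hand side, which is therefore integrable.
Summing over `k` telescopes, and `x_0 = 0`.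
-/

open Matrix

theorem dotProduct_forward_sub_dotProduct_adjoint {R ι κ : Type*} [CommRing R] [Fintype ι]
    [Fintype κ] (A D : Matrix ι ι R) (B E : Matrix ι κ R) (x u v φ : ι → R) (w : κ → R) :
    (A *ᵥ x + B *ᵥ w) ⬝ᵥ u + (D *ᵥ x + E *ᵥ w) ⬝ᵥ v - (Aᵀ *ᵥ u + Dᵀ *ᵥ v + φ) ⬝ᵥ x =
      -(φ ⬝ᵥ x) + (Bᵀ *ᵥ u + Eᵀ *ᵥ v) ⬝ᵥ w := by
  simp only [add_dotProduct, dotProduct_add, mulVec_transpose, ← dotProduct_mulVec,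
    dotProduct_comm _ u, dotProduct_comm _ v]
  ring

namespace MeasureTheory

variable {Ω ι κ : Type*} [Fintype ι] [Fintype κ]

theorem stronglyMeasurable_mulVec {mΩ : MeasurableSpace Ω} {M : Ω → Matrix ι κ ℝ}
    {v : Ω → κ → ℝ} (hM : ∀ i j, Measurable fun ω => M ω i j) (hv : StronglyMeasurable v) :
    StronglyMeasurable fun ω => M ω *ᵥ v ω :=
  (measurable_pi_iff.2 fun i => Finset.measurable_sum _ fun j _ =>
    (hM i j).mul (measurable_pi_apply j |>.comp hv.measurable)).stronglyMeasurable

variable {m m0 : MeasurableSpace Ω} {μ : Measure Ω}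

theorem MemLp.mulVec_of_bounded {p : ENNReal} {M : Ω → Matrix ι κ ℝ} {v : Ω → κ → ℝ}
    (hM : ∀ i j, AEStronglyMeasurable (fun ω => M ω i j) μ) (hMb : ∃ C, ∀ ω i j, |M ω i j| ≤ C)
    (hv : MemLp v p μ) : MemLp (fun ω => M ω *ᵥ v ω) p μ := by
  obtain ⟨C, hC⟩ := hMb
  refine MemLp.of_eval fun i => memLp_finsetSum _ fun j _ => ?_
  exact (hv.eval j).mul' (memLp_top_of_bound (hM i j) C (.of_forall fun ω => hC ω i j))

theorem MemLp.integrable_dotProduct {f g : Ω → ι → ℝ} (hf : MemLp f 2 μ) (hg : MemLp g 2 μ) :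
    Integrable (fun ω => f ω ⬝ᵥ g ω) μ :=
  integrable_finsetSum _ fun i _ => (hf.eval i).integrable_mul (hg.eval i)

theorem condExp_dotProduct_of_stronglyMeasurable_left {a Y : Ω → ι → ℝ}
    (ha : StronglyMeasurable[m] a) (haY : Integrable (fun ω => a ω ⬝ᵥ Y ω) μ)
    (hY : Integrable Y μ) :
    μ[fun ω => a ω ⬝ᵥ Y ω|m] =ᵐ[μ] fun ω => a ω ⬝ᵥ (μ[Y|m]) ω :=
  condExp_bilin_of_stronglyMeasurable_left
    (LinearMap.toContinuousLinearMap
      ((LinearMap.toContinuousLinearMap : ((ι → ℝ) →ₗ[ℝ] ℝ) ≃ₗ[ℝ] _).toLinearMap ∘ₗ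
        dotProductBilin ℝ ℝ)) ha haY hY

theorem condExp_dotProduct_of_ae_eq_add_smul [IsFiniteMeasure μ] {x' a g Y : Ω → ι → ℝ}
    {ξ : Ω → ℝ} (ha : StronglyMeasurable[m] a) (hg : StronglyMeasurable[m] g)
    (ha2 : MemLp a 2 μ) (hx'2 : MemLp x' 2 μ) (hY2 : MemLp Y 2 μ) (hξ2 : MemLp ξ 2 μ)
    (hx' : ∀ᵐ ω ∂μ, x' ω = a ω + ξ ω • g ω) :
    μ[fun ω => Y ω ⬝ᵥ x' ω|m] =ᵐ[μ]
      fun ω => a ω ⬝ᵥ (μ[Y|m]) ω + g ω ⬝ᵥ (μ[fun ω' => ξ ω' • Y ω'|m]) ω := by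
  have hsplit : (fun ω => Y ω ⬝ᵥ x' ω) =ᵐ[μ]
      fun ω => a ω ⬝ᵥ Y ω + g ω ⬝ᵥ (ξ ω • Y ω) := by
    filter_upwards [hx'] with ω hω
    rw [hω, dotProduct_add, dotProduct_smul, dotProduct_comm, dotProduct_smul,
      dotProduct_comm (g ω)]
  have haY : Integrable (fun ω => a ω ⬝ᵥ Y ω) μ := ha2.integrable_dotProduct hY2
  have hgξY : Integrable (fun ω => g ω ⬝ᵥ (ξ ω • Y ω)) μ :=
    ((hY2.integrable_dotProduct hx'2).sub haY).congr <| by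
      filter_upwards [hsplit] with ω hω
      simp only [Pi.sub_apply, hω, add_sub_cancel_left]
  have hξY : Integrable (fun ω => ξ ω • Y ω) μ :=
    memLp_one_iff_integrable.1 (hY2.smul hξ2)
  calc μ[fun ω => Y ω ⬝ᵥ x' ω|m]
      =ᵐ[μ] μ[fun ω => a ω ⬝ᵥ Y ω + g ω ⬝ᵥ (ξ ω • Y ω)|m] := condExp_congr_ae hsplit
    _ =ᵐ[μ] μ[fun ω => a ω ⬝ᵥ Y ω|m] + μ[fun ω => g ω ⬝ᵥ (ξ ω • Y ω)|m] :=
      condExp_add haY hgξY m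
    _ =ᵐ[μ] _ :=
      (condExp_dotProduct_of_stronglyMeasurable_left ha haY (hY2.integrable one_le_two)).add
        (condExp_dotProduct_of_stronglyMeasurable_left hg hgξY hξY)

theorem integral_dotProduct_sub_integral_dotProduct_eq [IsFiniteMeasure μ] (hm : m ≤ m0)
    {A D : Ω → Matrix ι ι ℝ} {B E : Ω → Matrix ι κ ℝ}
    (hA : ∀ i j, Measurable[m] fun ω => A ω i j) (hB : ∀ i j, Measurable[m] fun ω => B ω i j)
    (hD : ∀ i j, Measurable[m] fun ω => D ω i j) (hE : ∀ i j, Measurable[m] fun ω => E ω i j)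
    (hAb : ∃ C, ∀ ω i j, |A ω i j| ≤ C) (hBb : ∃ C, ∀ ω i j, |B ω i j| ≤ C)
    {ξ : Ω → ℝ} (hξ2 : MemLp ξ 2 μ)
    {x x' Y Z φ : Ω → ι → ℝ} {w : Ω → κ → ℝ}
    (hx : StronglyMeasurable[m] x) (hw : StronglyMeasurable[m] w)
    (hx2 : MemLp x 2 μ) (hw2 : MemLp w 2 μ) (hx'2 : MemLp x' 2 μ) (hY2 : MemLp Y 2 μ)
    (hZ2 : MemLp Z 2 μ)
    (hx' : ∀ᵐ ω ∂μ, x' ω = A ω *ᵥ x ω + B ω *ᵥ w ω + ξ ω • (D ω *ᵥ x ω + E ω *ᵥ w ω))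
    (hZ : ∀ᵐ ω ∂μ, Z ω = (A ω)ᵀ *ᵥ (μ[Y|m]) ω +
      (D ω)ᵀ *ᵥ (μ[fun ω' => ξ ω' • Y ω'|m]) ω + φ ω) :
    let r := fun ω => -(φ ω ⬝ᵥ x ω) +
      ((B ω)ᵀ *ᵥ (μ[Y|m]) ω + (E ω)ᵀ *ᵥ (μ[fun ω' => ξ ω' • Y ω'|m]) ω) ⬝ᵥ w ω
    Integrable r μ ∧ ∫ ω, Y ω ⬝ᵥ x' ω ∂μ - ∫ ω, Z ω ⬝ᵥ x ω ∂μ = ∫ ω, r ω ∂μ := by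
  intro r
  have hAB2 : MemLp (fun ω => A ω *ᵥ x ω + B ω *ᵥ w ω) 2 μ :=
    (hx2.mulVec_of_bounded (fun i j => ((hA i j).mono hm le_rfl).aestronglyMeasurable) hAb).add
      (hw2.mulVec_of_bounded (fun i j => ((hB i j).mono hm le_rfl).aestronglyMeasurable) hBb)
  have hcond := condExp_dotProduct_of_ae_eq_add_smul (m := m) (Y := Y)
    (a := fun ω => A ω *ᵥ x ω + B ω *ᵥ w ω) (g := fun ω => D ω *ᵥ x ω + E ω *ᵥ w ω)
    ((stronglyMeasurable_mulVec hA hx).add (stronglyMeasurable_mulVec hB hw))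
    ((stronglyMeasurable_mulVec hD hx).add (stronglyMeasurable_mulVec hE hw))
    hAB2 hx'2 hY2 hξ2 hx'
  have hr : r =ᵐ[μ] fun ω => μ[fun ω => Y ω ⬝ᵥ x' ω|m] ω - Z ω ⬝ᵥ x ω := by
    filter_upwards [hcond, hZ] with ω hcω hZω
    rw [hcω, hZω, dotProduct_forward_sub_dotProduct_adjoint]
  have hZx : Integrable (fun ω => Z ω ⬝ᵥ x ω) μ := hZ2.integrable_dotProduct hx2
  refine ⟨(integrable_condExp.sub hZx).congr hr.symm, ?_⟩
  rw [integral_congr_ae hr, integral_sub integrable_condExp hZx, integral_condExp hm]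

end MeasureTheory

open MeasureTheory

-- `G k` plays the role of `F_{k-1}`.
theorem stmt_6_general {Ω : Type*} {m0 : MeasurableSpace Ω} (μ : Measure Ω)
    [IsProbabilityMeasure μ]
    (n m N : ℕ) (G : ℕ → MeasurableSpace Ω)
    (hGle : ∀ k, G k ≤ m0)
    (A D : ℕ → Ω → Matrix (Fin n) (Fin n) ℝ)
    (B E : ℕ → Ω → Matrix (Fin n) (Fin m) ℝ)
    (hAmeas : ∀ k i j, Measurable[G k] fun ϖ => A k ϖ i j)
    (hBmeas : ∀ k i j, Measurable[G k] fun ϖ => B k ϖ i j)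
    (hDmeas : ∀ k i j, Measurable[G k] fun ϖ => D k ϖ i j)
    (hEmeas : ∀ k i j, Measurable[G k] fun ϖ => E k ϖ i j)
    (hAbdd : ∀ k, ∃ C : ℝ, ∀ ϖ i j, |A k ϖ i j| ≤ C)
    (hBbdd : ∀ k, ∃ C : ℝ, ∀ ϖ i j, |B k ϖ i j| ≤ C)
    (ω : ℕ → Ω → ℝ)
    (hωL2 : ∀ k, MemLp (ω k) 2 μ)
    (w : ℕ → Ω → Fin m → ℝ) (φ : ℕ → Ω → Fin n → ℝ)
    (hwmeas : ∀ k, StronglyMeasurable[G k] (w k))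
    (hwL2 : ∀ k, MemLp (w k) 2 μ)
    (xw : ℕ → Ω → Fin n → ℝ)
    (hxwmeas : ∀ k, StronglyMeasurable[G (k + 1)] (xw (k + 1)))
    (hxwL2 : ∀ k, MemLp (xw k) 2 μ)
    (hxw0 : ∀ ϖ, xw 0 ϖ = 0)
    (hxw : ∀ k < N, ∀ᵐ ϖ ∂μ, xw (k + 1) ϖ =
      (A k ϖ).mulVec (xw k ϖ) + (B k ϖ).mulVec (w k ϖ) +
        ω k ϖ • ((D k ϖ).mulVec (xw k ϖ) + (E k ϖ).mulVec (w k ϖ)))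
    (y : ℕ → Ω → Fin n → ℝ)
    (hyL2 : ∀ k, MemLp (y k) 2 μ)
    (hy : ∀ k < N, ∀ᵐ ϖ ∂μ, y k ϖ =
      (A k ϖ)ᵀ.mulVec ((μ[y (k + 1)|G k]) ϖ) +
        (D k ϖ)ᵀ.mulVec ((μ[fun ϖ' => ω k ϖ' • y (k + 1) ϖ'|G k]) ϖ) + φ k ϖ) :
    ∫ ϖ, y N ϖ ⬝ᵥ xw N ϖ ∂μ =
      ∫ ϖ, ∑ k ∈ Finset.range N,
        (-(φ k ϖ ⬝ᵥ xw k ϖ) +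
          ((B k ϖ)ᵀ.mulVec ((μ[y (k + 1)|G k]) ϖ) +
            (E k ϖ)ᵀ.mulVec ((μ[fun ϖ' => ω k ϖ' • y (k + 1) ϖ'|G k]) ϖ)) ⬝ᵥ w k ϖ) ∂μ := by
  have hxw_meas : ∀ k, StronglyMeasurable[G k] (xw k)
    | 0 => by rw [funext hxw0]; exact stronglyMeasurable_const
    | k + 1 => hxwmeas k
  have hstep : ∀ k ∈ Finset.range N, _ := fun k hk =>
    integral_dotProduct_sub_integral_dotProduct_eq (hGle k) (hAmeas k) (hBmeas k) (hDmeas k)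
      (hEmeas k) (hAbdd k) (hBbdd k) (hωL2 k) (hxw_meas k) (hwmeas k) (hxwL2 k) (hwL2 k)
      (hxwL2 (k + 1)) (hyL2 (k + 1)) (hyL2 k) (hxw k (Finset.mem_range.1 hk))
      (hy k (Finset.mem_range.1 hk))
  rw [integral_finsetSum _ fun k hk => (hstep k hk).1,
    ← Finset.sum_congr rfl fun k hk => (hstep k hk).2,
    Finset.sum_range_sub (fun k => ∫ ϖ, y k ϖ ⬝ᵥ xw k ϖ ∂μ)]
  simp [hxw0]

/-- Discrete duality (summation by parts) for the forward-backward pair: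
if `x^w` satisfies `x^w_{k+1} = A_k x^w_k + B_k w_k + (D_k x^w_k + E_k w_k) ω_k` with
`x^w_0 = 0` and `y` satisfies the backward recursion
`y_k = A_kᵀ E[y_{k+1}|F_{k-1}] + D_kᵀ E[y_{k+1} ω_k|F_{k-1}] + φ_k`, then
`E⟨y_N, x^w_N⟩ = E Σ_{k<N} [-⟨φ_k, x^w_k⟩ + ⟨B_kᵀ E[y_{k+1}|F_{k-1}] +
E_kᵀ E[y_{k+1} ω_k|F_{k-1}], w_k⟩]`.  Here `G k` denotes `F_{k-1}`. -/
theorem stmt_6 {Ω : Type*} {m0 : MeasurableSpace Ω} (μ : Measure Ω)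
    [IsProbabilityMeasure μ]
    (n m N : ℕ) (G : ℕ → MeasurableSpace Ω)
    (hGmono : ∀ k, G k ≤ G (k + 1)) (hGle : ∀ k, G k ≤ m0)
    (hGtriv : ∀ s, MeasurableSet[G 0] s → μ s = 0 ∨ μ s = 1)
    (A D : ℕ → Ω → Matrix (Fin n) (Fin n) ℝ)
    (B E : ℕ → Ω → Matrix (Fin n) (Fin m) ℝ)
    (hAmeas : ∀ k i j, Measurable[G k] fun ϖ => A k ϖ i j)
    (hBmeas : ∀ k i j, Measurable[G k] fun ϖ => B k ϖ i j)
    (hDmeas : ∀ k i j, Measurable[G k] fun ϖ => D k ϖ i j)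
    (hEmeas : ∀ k i j, Measurable[G k] fun ϖ => E k ϖ i j)
    (hAbdd : ∀ k, ∃ C : ℝ, ∀ ϖ i j, |A k ϖ i j| ≤ C)
    (hBbdd : ∀ k, ∃ C : ℝ, ∀ ϖ i j, |B k ϖ i j| ≤ C)
    (hDbdd : ∀ k, ∃ C : ℝ, ∀ ϖ i j, |D k ϖ i j| ≤ C)
    (hEbdd : ∀ k, ∃ C : ℝ, ∀ ϖ i j, |E k ϖ i j| ≤ C)
    (ω : ℕ → Ω → ℝ)
    (hωmeas : ∀ k, Measurable[G (k + 1)] (ω k))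
    (hωL2 : ∀ k, MemLp (ω k) 2 μ)
    (hωmean : ∀ k, μ[ω k|G k] =ᵐ[μ] 0)
    (hωvar : ∀ k, μ[fun ϖ => (ω k ϖ) ^ 2|G k] =ᵐ[μ] 1)
    (w : ℕ → Ω → Fin m → ℝ) (φ : ℕ → Ω → Fin n → ℝ)
    (hwmeas : ∀ k, StronglyMeasurable[G k] (w k))
    (hwL2 : ∀ k, MemLp (w k) 2 μ)
    (hφmeas : ∀ k, StronglyMeasurable[G k] (φ k))
    (hφL2 : ∀ k, MemLp (φ k) 2 μ)
    (xw : ℕ → Ω → Fin n → ℝ)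
    (hxwmeas : ∀ k, StronglyMeasurable[G (k + 1)] (xw (k + 1)))
    (hxwL2 : ∀ k, MemLp (xw k) 2 μ)
    (hxw0 : ∀ ϖ, xw 0 ϖ = 0)
    (hxw : ∀ k < N, ∀ᵐ ϖ ∂μ, xw (k + 1) ϖ =
      (A k ϖ).mulVec (xw k ϖ) + (B k ϖ).mulVec (w k ϖ) +
        ω k ϖ • ((D k ϖ).mulVec (xw k ϖ) + (E k ϖ).mulVec (w k ϖ)))
    (y : ℕ → Ω → Fin n → ℝ)
    (hymeas : ∀ k, StronglyMeasurable[G (k + 1)] (y (k + 1)))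
    (hyL2 : ∀ k, MemLp (y k) 2 μ)
    (hy : ∀ k < N, ∀ᵐ ϖ ∂μ, y k ϖ =
      (A k ϖ)ᵀ.mulVec ((μ[y (k + 1)|G k]) ϖ) +
        (D k ϖ)ᵀ.mulVec ((μ[fun ϖ' => ω k ϖ' • y (k + 1) ϖ'|G k]) ϖ) + φ k ϖ) :
    ∫ ϖ, y N ϖ ⬝ᵥ xw N ϖ ∂μ =
      ∫ ϖ, ∑ k ∈ Finset.range N,
        (-(φ k ϖ ⬝ᵥ xw k ϖ) +
          ((B k ϖ)ᵀ.mulVec ((μ[y (k + 1)|G k]) ϖ) +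
            (E k ϖ)ᵀ.mulVec ((μ[fun ϖ' => ω k ϖ' • y (k + 1) ϖ'|G k]) ϖ)) ⬝ᵥ w k ϖ) ∂μ :=
  stmt_6_general μ n m N G hGle A D B E hAmeas hBmeas hDmeas hEmeas hAbdd hBbdd ω hωL2 w φ hwmeas
    hwL2 xw hxwmeas hxwL2 hxw0 hxw y hyL2 hy
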